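/- arXiv:2111.04048 — 3 statements merged into one kernel-verified Lean document; each statement's English description precedes it below -/
import Mathlib

section
/- Let psi : R^{1+2} -> C^2 be sufficiently regular and supported in the cone K. Then for every s >= 2 one has the identity E^D(s,psi) = (1/2) Integral_{H_s} (s^2/t^2) psi^* psi dx + (1/2) E^+(s,psi); equivalently, at every point of H_s one has the pointwise identity 2 ( psi^* psi - (x_a/t) psi^* gamma^0 gamma^a psi ) = (s^2/t^2) psi^* psi + (psi)_-^* (psi)_-. In particular E^D(s,psi) >= 0 and ||(s/t) psi||_{L^2_f(H_s)} + ||(psi)_-||_{L^2_f(H_s)} <= 4 E^D(s,psi)^{1/2}. -/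
noncomputable section

open MeasureTheory Matrix Finset Real Filter

/-- Spacetime `ℝ^{1+2}`: coordinate `0` is time, coordinates `1, 2` are space. -/
abbrev Spt : Type := Fin 3 → ℝ
/-- Space `ℝ²`. -/
abbrev Sp : Type := Fin 2 → ℝ
/-- Spinor space `ℂ²`. -/
abbrev Spinor : Type := Fin 2 → ℂ

/-- Minkowski metric `g = diag(-1, 1, 1)`. -/
def mink (μ ν : Fin 3) : ℝ := if μ = ν then (if μ = 0 then -1 else 1) else 0

/-- A choice of `2 × 2` complex Dirac matrices `γ^0, γ^1, γ^2` satisfying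
`γ^μ γ^ν + γ^ν γ^μ = -2 g^{μν} I₂` and `(γ^μ)^* = -g_{μν} γ^ν`. -/
structure DiracMatrices where
  γ : Fin 3 → Matrix (Fin 2) (Fin 2) ℂ
  clifford : ∀ μ ν, γ μ * γ ν + γ ν * γ μ
      = ((-2 * mink μ ν : ℝ) : ℂ) • (1 : Matrix (Fin 2) (Fin 2) ℂ)
  adjoint : ∀ μ, (γ μ)ᴴ = ((-(mink μ μ) : ℝ) : ℂ) • γ μ

/-- Partial derivative `∂_μ` of a function on spacetime. -/
def pt {V : Type*} [NormedAddCommGroup V] [NormedSpace ℝ V] (μ : Fin 3) (f : Spt → V) :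
    Spt → V :=
  fun p => fderiv ℝ f p (Pi.single μ 1)

/-- `|x|²` for spatial points. -/
def xrsq (x : Sp) : ℝ := ∑ a : Fin 2, (x a) ^ 2

/-- `|x|²` of the spatial part of a spacetime point. -/
def rsq (p : Spt) : ℝ := ∑ a : Fin 2, (p a.succ) ^ 2

/-- The interior of the light cone, `K = {(t,x) : t ≥ 2, |x| < t - 1}`. -/
def inK (p : Spt) : Prop := 2 ≤ p 0 ∧ Real.sqrt (rsq p) < p 0 - 1

/-- Parametrization of the hyperboloid `H_s` by space: `x ↦ (√(s² + |x|²), x)`. -/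
def onH (s : ℝ) (x : Sp) : Spt := Fin.cons (Real.sqrt (s ^ 2 + xrsq x)) x

/-- Squared pointwise (Euclidean) norm of a spinor, `ψ^* ψ`. -/
def snormSq (v : Spinor) : ℝ := ∑ i : Fin 2, Complex.normSq (v i)

/-- The sesquilinear expression `v^* γ^0 w`. -/
def bil (Γ : DiracMatrices) (v w : Spinor) : ℂ := star v ⬝ᵥ (Γ.γ 0).mulVec w

/-- The Dirac operator with mass: `i γ^μ ∂_μ ψ + m ψ`. -/
def dirac (Γ : DiracMatrices) (m : ℝ) (ψ : Spt → Spinor) : Spt → Spinor :=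
  fun p => (∑ μ : Fin 3, Complex.I • (Γ.γ μ).mulVec (pt μ ψ p)) + (m : ℂ) • ψ p

/-- The Soler nonlinearity `(ψ^* γ^0 ψ) ψ`. -/
def soler (Γ : DiracMatrices) (ψ : Spt → Spinor) : Spt → Spinor :=
  fun p => bil Γ (ψ p) (ψ p) • ψ p

/-- Lorentz boost `L_a = t ∂_a + x_a ∂_t`. -/
def Lb {V : Type*} [NormedAddCommGroup V] [NormedSpace ℝ V] (a : Fin 2) (f : Spt → V) :
    Spt → V :=
  fun p => p 0 • pt a.succ f p + p a.succ • pt 0 f p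

/-- Modified Lorentz boost `hat L_a = L_a - (1/2) γ^0 γ^a`. -/
def hatLb (Γ : DiracMatrices) (a : Fin 2) (f : Spt → Spinor) : Spt → Spinor :=
  fun p => Lb a f p - (1 / 2 : ℂ) • (Γ.γ 0 * Γ.γ a.succ).mulVec (f p)

/-- Semi-hyperboloidal derivative `underline ∂_a = (x_a/t) ∂_t + ∂_a`. -/
def und {V : Type*} [NormedAddCommGroup V] [NormedSpace ℝ V] (a : Fin 2) (f : Spt → V) :
    Spt → V :=
  fun p => (p a.succ / p 0) • pt 0 f p + pt a.succ f p

/-- Iterated translations `∂^I`. -/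
def ptList {V : Type*} [NormedAddCommGroup V] [NormedSpace ℝ V] (I : List (Fin 3))
    (f : Spt → V) : Spt → V :=
  I.foldr (fun μ g => pt μ g) f

/-- Iterated Lorentz boosts `L^J`. -/
def LbList {V : Type*} [NormedAddCommGroup V] [NormedSpace ℝ V] (J : List (Fin 2))
    (f : Spt → V) : Spt → V :=
  J.foldr (fun a g => Lb a g) f

/-- Iterated modified Lorentz boosts `hat L^J`. -/
def hatLbList (Γ : DiracMatrices) (J : List (Fin 2)) (f : Spt → Spinor) : Spt → Spinor :=
  J.foldr (fun a g => hatLb Γ a g) f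

/-- `(v)_- = v - (x_a/t) γ^0 γ^a v` (with explicit `t`, `x`). -/
def tMinusX (Γ : DiracMatrices) (t : ℝ) (x : Sp) (v : Spinor) : Spinor :=
  v - ∑ a : Fin 2, (x a / t) • (Γ.γ 0 * Γ.γ a.succ).mulVec v

/-- `(v)_+ = v + (x_a/t) γ^0 γ^a v` (with explicit `t`, `x`). -/
def tPlusX (Γ : DiracMatrices) (t : ℝ) (x : Sp) (v : Spinor) : Spinor :=
  v + ∑ a : Fin 2, (x a / t) • (Γ.γ 0 * Γ.γ a.succ).mulVec v

/-- `(v)_-` at a spacetime point. -/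
def tMinus (Γ : DiracMatrices) (p : Spt) (v : Spinor) : Spinor :=
  tMinusX Γ (p 0) (fun a => p a.succ) v

/-- `[v]_- = v - (x_j/r) γ^0 γ^j v`. -/
def rMinus (Γ : DiracMatrices) (x : Sp) (v : Spinor) : Spinor :=
  v - ∑ a : Fin 2, (x a / Real.sqrt (xrsq x)) • (Γ.γ 0 * Γ.γ a.succ).mulVec v

/-- `[v]_+ = v + (x_j/r) γ^0 γ^j v`. -/
def rPlus (Γ : DiracMatrices) (x : Sp) (v : Spinor) : Spinor :=
  v + ∑ a : Fin 2, (x a / Real.sqrt (xrsq x)) • (Γ.γ 0 * Γ.γ a.succ).mulVec v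

/-- Hyperboloidal Dirac energy density `ψ^* ψ - (x_a/t) ψ^* γ^0 γ^a ψ`. -/
def EDdens (Γ : DiracMatrices) (ψ : Spt → Spinor) (p : Spt) : ℝ :=
  (star (ψ p) ⬝ᵥ ψ p
    - ∑ a : Fin 2, ((p a.succ / p 0 : ℝ) : ℂ)
        * (star (ψ p) ⬝ᵥ (Γ.γ 0 * Γ.γ a.succ).mulVec (ψ p))).re

/-- The hyperboloidal Dirac energy `E^D(s, ψ)`. -/
def ED (Γ : DiracMatrices) (s : ℝ) (ψ : Spt → Spinor) : ℝ :=
  ∫ x : Sp, EDdens Γ ψ (onH s x)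

/-- The energy `E^+(s, ψ) = ∫_{H_s} (ψ)_-^* (ψ)_-`. -/
def Eplus (Γ : DiracMatrices) (s : ℝ) (ψ : Spt → Spinor) : ℝ :=
  ∫ x : Sp, snormSq (tMinus Γ (onH s x) (ψ (onH s x)))

/-- The `L²_f(H_s)` norm of a spinor field. -/
def L2f (s : ℝ) (f : Spt → Spinor) : ℝ :=
  Real.sqrt (∫ x : Sp, snormSq (f (onH s x)))

/-- Spatial partial derivative for functions on `ℝ²`. -/
def spd (a : Fin 2) (f : Sp → Spinor) : Sp → Spinor :=
  fun x => fderiv ℝ f x (Pi.single a 1)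

/-- Squared Sobolev `H^k` norm: sum over spatial multi-indices `|α| ≤ k` of
`‖∂^α f‖_{L²(ℝ²)}²`. -/
def sobNormSq (k : ℕ) (f : Sp → Spinor) : ℝ :=
  ∑ i ∈ Finset.range (k + 1), ∑ j ∈ Finset.range (k + 1 - i),
    ∫ x : Sp, snormSq ((spd 0)^[i] ((spd 1)^[j] f) x)

/-- The Sobolev `H^k` norm. -/
def sobNorm (k : ℕ) (f : Sp → Spinor) : ℝ := Real.sqrt (sobNormSq k f)

/-- Membership in `H^k(ℝ²; ℂ²)`: all derivatives of order `≤ k` are in `L²`. -/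
def sobMem (k : ℕ) (f : Sp → Spinor) : Prop :=
  ∀ i j : ℕ, i + j ≤ k → MemLp ((spd 0)^[i] ((spd 1)^[j] f)) 2 (volume : Measure Sp)

/-- The time-`t` slice of a spacetime function. -/
def timeSlice (ψ : Spt → Spinor) (t : ℝ) : Sp → Spinor := fun x => ψ (Fin.cons t x)

/-- The wave operator `□ = -∂_t ∂_t + Δ`. -/
def waveOp {V : Type*} [NormedAddCommGroup V] [NormedSpace ℝ V] (u : Spt → V) : Spt → V :=
  fun p => -(pt 0 (pt 0 u) p) + ∑ a : Fin 2, pt a.succ (pt a.succ u) p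

/-- The operator `K = s ∂_s + 2 x^a underline∂_a`, written on the hyperboloid `H_s`
(where `s ∂_s = (s²/t) ∂_t`). -/
def Kop (s : ℝ) (u : Spt → Spinor) : Spt → Spinor :=
  fun p => (s ^ 2 / p 0) • pt 0 u p + (2 : ℝ) • ∑ a : Fin 2, p a.succ • und a u p

/-- The conformal energy on `H_s`. -/
def Econ (s : ℝ) (u : Spt → Spinor) : ℝ :=
  ∫ x : Sp, ((∑ a : Fin 2, s ^ 2 * snormSq (und a u (onH s x)))
    + snormSq (Kop s u (onH s x) + u (onH s x)))

namespace HypAux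

variable (Γ : DiracMatrices)

lemma mink_succ (a : Fin 2) : mink a.succ a.succ = 1 := by
  fin_cases a <;> rfl

lemma mink_zero_succ (a : Fin 2) : mink 0 a.succ = 0 := by
  fin_cases a <;> rfl

lemma gamma0_sq : Γ.γ 0 * Γ.γ 0 = 1 := by
  have h := Γ.clifford 0 0
  have h2 : (2:ℂ) • (Γ.γ 0 * Γ.γ 0) = (2:ℂ) • (1 : Matrix (Fin 2) (Fin 2) ℂ) := by
    rw [two_smul, h]
    norm_num [mink]
  exact smul_right_injective _ two_ne_zero h2

lemma anticomm0 (a : Fin 2) : Γ.γ a.succ * Γ.γ 0 = -(Γ.γ 0 * Γ.γ a.succ) := by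
  have h := Γ.clifford 0 a.succ
  rw [mink_zero_succ] at h
  norm_num at h
  exact eq_neg_of_add_eq_zero_right h

lemma AA (a b : Fin 2) :
    (Γ.γ 0 * Γ.γ a.succ) * (Γ.γ 0 * Γ.γ b.succ) = -(Γ.γ a.succ * Γ.γ b.succ) := by
  calc (Γ.γ 0 * Γ.γ a.succ) * (Γ.γ 0 * Γ.γ b.succ)
      = Γ.γ 0 * (Γ.γ a.succ * Γ.γ 0) * Γ.γ b.succ := by noncomm_ring
    _ = Γ.γ 0 * (-(Γ.γ 0 * Γ.γ a.succ)) * Γ.γ b.succ := by rw [anticomm0]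
    _ = -((Γ.γ 0 * Γ.γ 0) * (Γ.γ a.succ * Γ.γ b.succ)) := by noncomm_ring
    _ = -(Γ.γ a.succ * Γ.γ b.succ) := by rw [gamma0_sq, one_mul]

lemma gsq_succ (a : Fin 2) : Γ.γ a.succ * Γ.γ a.succ = -1 := by
  have h := Γ.clifford a.succ a.succ
  rw [mink_succ] at h
  have h2 : (2:ℂ) • (Γ.γ a.succ * Γ.γ a.succ)
      = (2:ℂ) • (-1 : Matrix (Fin 2) (Fin 2) ℂ) := by
    rw [two_smul, h]
    norm_num
  exact smul_right_injective _ two_ne_zero h2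

lemma Asq (a : Fin 2) : (Γ.γ 0 * Γ.γ a.succ) * (Γ.γ 0 * Γ.γ a.succ) = 1 := by
  rw [AA, gsq_succ, neg_neg]

lemma Aanti : (Γ.γ 0 * Γ.γ (0:Fin 2).succ) * (Γ.γ 0 * Γ.γ (1:Fin 2).succ)
    = -((Γ.γ 0 * Γ.γ (1:Fin 2).succ) * (Γ.γ 0 * Γ.γ (0:Fin 2).succ)) := by
  rw [AA, AA]
  have h := Γ.clifford (0:Fin 2).succ (1:Fin 2).succ
  rw [show mink (0:Fin 2).succ (1:Fin 2).succ = 0 from rfl] at h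
  norm_num at h
  show -(Γ.γ 1 * Γ.γ 2) = - -(Γ.γ 2 * Γ.γ 1)
  rw [eq_neg_of_add_eq_zero_left h, neg_neg]

lemma Aherm (a : Fin 2) : (Γ.γ 0 * Γ.γ a.succ)ᴴ = Γ.γ 0 * Γ.γ a.succ := by
  rw [Matrix.conjTranspose_mul, Γ.adjoint 0, Γ.adjoint a.succ, mink_succ]
  rw [show mink 0 0 = -1 from rfl]
  push_cast
  rw [neg_neg, one_smul, neg_smul, one_smul, neg_mul, anticomm0, neg_neg]

end HypAux

namespace HypAux

lemma real_smul_spinor (r : ℝ) (w : Spinor) : r • w = ((r:ℝ):ℂ) • w := by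
  funext i
  simp [Complex.real_smul]

lemma key (Γ : DiracMatrices) (c : Fin 2 → ℝ) (v : Spinor) :
    star (v - ∑ a : Fin 2, c a • (Γ.γ 0 * Γ.γ a.succ).mulVec v) ⬝ᵥ
      (v - ∑ a : Fin 2, c a • (Γ.γ 0 * Γ.γ a.succ).mulVec v)
    = ((1 + (c 0 ^ 2 + c 1 ^ 2) : ℝ) : ℂ) * (star v ⬝ᵥ v)
      - 2 * (((c 0 : ℝ) : ℂ) * (star v ⬝ᵥ (Γ.γ 0 * Γ.γ (0:Fin 2).succ).mulVec v)
           + ((c 1 : ℝ) : ℂ) * (star v ⬝ᵥ (Γ.γ 0 * Γ.γ (1:Fin 2).succ).mulVec v)) := by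
  set A0 := Γ.γ 0 * Γ.γ (0:Fin 2).succ with hA0
  set A1 := Γ.γ 0 * Γ.γ (1:Fin 2).succ with hA1
  set S : Matrix (Fin 2) (Fin 2) ℂ := ((c 0 :ℝ):ℂ) • A0 + ((c 1:ℝ):ℂ) • A1 with hS
  have hw : v - ∑ a : Fin 2, c a • (Γ.γ 0 * Γ.γ a.succ).mulVec v = (1 - S) *ᵥ v := by
    rw [Fin.sum_univ_two, Matrix.sub_mulVec, Matrix.one_mulVec, hS, Matrix.add_mulVec,
      Matrix.smul_mulVec, Matrix.smul_mulVec,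
      real_smul_spinor (c 0), real_smul_spinor (c 1)]
  have hSH : (1 - S)ᴴ = 1 - S := by
    rw [Matrix.conjTranspose_sub, Matrix.conjTranspose_one, hS, Matrix.conjTranspose_add,
      Matrix.conjTranspose_smul, Matrix.conjTranspose_smul, hA0, hA1,
      Aherm Γ 0, Aherm Γ 1]
    simp [Complex.star_def, Complex.conj_ofReal]
  have hSS : S * S = ((c 0 ^2 + c 1 ^2 : ℝ):ℂ) • (1 : Matrix (Fin 2) (Fin 2) ℂ) := by
    rw [hS]
    rw [add_mul, mul_add, mul_add, smul_mul_assoc, smul_mul_assoc, smul_mul_assoc,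
      smul_mul_assoc, mul_smul_comm, mul_smul_comm, mul_smul_comm, mul_smul_comm,
      Asq Γ 0, Asq Γ 1, hA0, hA1, Aanti Γ]
    rw [smul_smul, smul_smul, smul_smul, smul_smul]
    push_cast
    module
  have main : star ((1-S) *ᵥ v) ⬝ᵥ ((1-S) *ᵥ v)
      = star v ⬝ᵥ (((1-S)ᴴ * (1-S)) *ᵥ v) := by
    rw [Matrix.star_mulVec, Matrix.dotProduct_mulVec, Matrix.dotProduct_mulVec,
      Matrix.vecMul_vecMul]
  have hM : (1-S)ᴴ * (1-S)
      = 1 - S - S + ((c 0 ^2 + c 1 ^2 : ℝ):ℂ) • (1 : Matrix (Fin 2) (Fin 2) ℂ) := by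
    rw [hSH, ← hSS]
    noncomm_ring
  have hSv : star v ⬝ᵥ (S *ᵥ v)
      = ((c 0 :ℝ):ℂ) * (star v ⬝ᵥ A0 *ᵥ v) + ((c 1 :ℝ):ℂ) * (star v ⬝ᵥ A1 *ᵥ v) := by
    rw [hS, Matrix.add_mulVec, Matrix.smul_mulVec, Matrix.smul_mulVec,
      dotProduct_add, dotProduct_smul, dotProduct_smul,
      smul_eq_mul, smul_eq_mul]
  rw [hw, main, hM]
  rw [Matrix.add_mulVec, Matrix.sub_mulVec, Matrix.sub_mulVec, Matrix.one_mulVec,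
    Matrix.smul_mulVec, dotProduct_add, dotProduct_sub,
    dotProduct_sub, dotProduct_smul, hSv, smul_eq_mul,
    Matrix.one_mulVec]
  push_cast
  ring


lemma dot_self (v : Spinor) : star v ⬝ᵥ v = ((snormSq v : ℝ) : ℂ) := by
  simp only [dotProduct, snormSq, Fin.sum_univ_two, Pi.star_apply, Complex.star_def]
  push_cast [Complex.normSq_eq_conj_mul_self]
  ring

lemma snormSq_nonneg (v : Spinor) : 0 ≤ snormSq v :=
  Finset.sum_nonneg fun i _ => Complex.normSq_nonneg _

lemma snormSq_zero : snormSq 0 = 0 := by simp [snormSq]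

end HypAux


/-- Decomposition and positivity of the hyperboloidal Dirac energy. -/
theorem hyperboloidal_dirac_energy_identity
    (Γ : DiracMatrices) (ψ : Spt → Spinor)
    (hreg : ContDiff ℝ (⊤ : ℕ∞) ψ)
    (hsupp : ∀ p : Spt, ¬ inK p → ψ p = 0) :
    ∀ s : ℝ, 2 ≤ s →
      -- pointwise identity on H_s
      (∀ x : Sp,
        2 * (star (ψ (onH s x)) ⬝ᵥ ψ (onH s x)
              - ∑ a : Fin 2, ((x a / (onH s x) 0 : ℝ) : ℂ)
                  * (star (ψ (onH s x)) ⬝ᵥ (Γ.γ 0 * Γ.γ a.succ).mulVec (ψ (onH s x))))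
          = ((s ^ 2 / ((onH s x) 0) ^ 2 : ℝ) : ℂ) * (star (ψ (onH s x)) ⬝ᵥ ψ (onH s x))
            + star (tMinus Γ (onH s x) (ψ (onH s x)))
                ⬝ᵥ tMinus Γ (onH s x) (ψ (onH s x))) ∧
      -- integral identity
      ED Γ s ψ
        = (1 / 2) * (∫ x : Sp, (s ^ 2 / ((onH s x) 0) ^ 2) * snormSq (ψ (onH s x)))
          + (1 / 2) * Eplus Γ s ψ ∧
      -- positivity
      0 ≤ ED Γ s ψ ∧
      -- norm bound
      Real.sqrt (∫ x : Sp, (s / (onH s x) 0) ^ 2 * snormSq (ψ (onH s x)))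
          + Real.sqrt (∫ x : Sp, snormSq (tMinus Γ (onH s x) (ψ (onH s x))))
        ≤ 4 * Real.sqrt (ED Γ s ψ) := by
  intro s hs
  have hs0 : (0:ℝ) < s := by linarith
  have hxrsq : ∀ x : Sp, xrsq x = x 0 ^ 2 + x 1 ^ 2 := fun x => by
    simp [xrsq, Fin.sum_univ_two]
  have hxrsq_nonneg : ∀ x : Sp, 0 ≤ xrsq x := fun x => by
    rw [hxrsq]; positivity
  set t : Sp → ℝ := fun x => Real.sqrt (s ^ 2 + xrsq x) with hT
  have ht_pos : ∀ x : Sp, 0 < t x := fun x =>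
    Real.sqrt_pos.2 (by nlinarith [hxrsq_nonneg x])
  have ht_sq : ∀ x : Sp, t x ^ 2 = s ^ 2 + xrsq x := fun x =>
    Real.sq_sqrt (by nlinarith [hxrsq_nonneg x])
  have hcons0 : ∀ x : Sp, (onH s x) 0 = t x := fun x => by simp [onH, hT]
  have hconss : ∀ (x : Sp) (a : Fin 2), (onH s x) a.succ = x a := fun x a => by
    simp [onH]
  -- Part 1 : pointwise identity
  have part1 : ∀ x : Sp,
      2 * (star (ψ (onH s x)) ⬝ᵥ ψ (onH s x)
            - ∑ a : Fin 2, ((x a / (onH s x) 0 : ℝ) : ℂ)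
                * (star (ψ (onH s x)) ⬝ᵥ (Γ.γ 0 * Γ.γ a.succ).mulVec (ψ (onH s x))))
        = ((s ^ 2 / ((onH s x) 0) ^ 2 : ℝ) : ℂ) * (star (ψ (onH s x)) ⬝ᵥ ψ (onH s x))
          + star (tMinus Γ (onH s x) (ψ (onH s x)))
              ⬝ᵥ tMinus Γ (onH s x) (ψ (onH s x)) := by
    intro x
    have hkey := HypAux.key Γ (fun a => x a / t x) (ψ (onH s x))
    have htm : tMinus Γ (onH s x) (ψ (onH s x))
        = ψ (onH s x)
          - ∑ a : Fin 2, (x a / t x) • (Γ.γ 0 * Γ.γ a.succ).mulVec (ψ (onH s x)) := by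
      simp only [tMinus, tMinusX, hcons0, hconss]
    have hc : (s ^ 2 / t x ^ 2) + ((x 0 / t x) ^ 2 + (x 1 / t x) ^ 2) = 1 := by
      have h1 := ht_sq x
      have h2 := ht_pos x
      have h3 := hxrsq x
      field_simp
      nlinarith [h1, h3]
    have hcC : ((s ^ 2 / t x ^ 2 : ℝ) : ℂ)
        + (((x 0 / t x) ^ 2 + (x 1 / t x) ^ 2 : ℝ) : ℂ) = 1 := by
      rw [← Complex.ofReal_add, ← Complex.ofReal_one]
      exact_mod_cast congrArg (fun r : ℝ => (r : ℂ)) hc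
    rw [htm, hkey]
    simp only [hcons0, Fin.sum_univ_two]
    push_cast at hcC ⊢
    linear_combination (-(star (ψ (onH s x)) ⬝ᵥ ψ (onH s x))) * hcC
  refine ⟨part1, ?_⟩
  -- pointwise real identity
  have hpt : ∀ x : Sp, EDdens Γ ψ (onH s x)
      = (1/2) * ((s ^ 2 / ((onH s x) 0) ^ 2) * snormSq (ψ (onH s x)))
        + (1/2) * snormSq (tMinus Γ (onH s x) (ψ (onH s x))) := by
    intro x
    have h1 := part1 x
    rw [HypAux.dot_self, HypAux.dot_self] at h1
    have h2 : (((snormSq (ψ (onH s x)) : ℝ) : ℂ)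
        - ∑ a : Fin 2, ((x a / (onH s x) 0 : ℝ) : ℂ)
            * (star (ψ (onH s x)) ⬝ᵥ (Γ.γ 0 * Γ.γ a.succ).mulVec (ψ (onH s x))))
        = (((1/2) * ((s ^ 2 / ((onH s x) 0) ^ 2) * snormSq (ψ (onH s x)))
           + (1/2) * snormSq (tMinus Γ (onH s x) (ψ (onH s x))) : ℝ) : ℂ) := by
      push_cast at h1 ⊢
      linear_combination h1 / 2
    have h3 : EDdens Γ ψ (onH s x)
        = (((snormSq (ψ (onH s x)) : ℝ) : ℂ)
          - ∑ a : Fin 2, ((x a / (onH s x) 0 : ℝ) : ℂ)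
              * (star (ψ (onH s x)) ⬝ᵥ (Γ.γ 0 * Γ.γ a.succ).mulVec (ψ (onH s x)))).re := by
      simp only [EDdens, hconss, HypAux.dot_self]
    rw [h3, h2, Complex.ofReal_re]
  -- continuity facts
  have hxrsq_cont : Continuous xrsq := by
    unfold xrsq
    exact continuous_finset_sum _ fun a _ => (continuous_apply a).pow 2
  have htc : Continuous t := by
    rw [hT]
    exact Real.continuous_sqrt.comp (continuous_const.add hxrsq_cont)
  have honH : Continuous (onH s) := by
    refine continuous_pi fun i => ?_
    refine Fin.cases ?_ ?_ i
    · simp only [onH, Fin.cons_zero]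
      exact Real.continuous_sqrt.comp (continuous_const.add hxrsq_cont)
    · intro j
      simp only [onH, Fin.cons_succ]
      exact continuous_apply j
  have hψHc : Continuous fun x : Sp => ψ (onH s x) := hreg.continuous.comp honH
  have hsnc : Continuous snormSq := by
    unfold snormSq
    exact continuous_finset_sum _ fun i _ =>
      Complex.continuous_normSq.comp (continuous_apply i)
  have hmv : ∀ M : Matrix (Fin 2) (Fin 2) ℂ, Continuous fun v : Spinor => M *ᵥ v := by
    intro M
    refine continuous_pi fun i => ?_
    simp only [Matrix.mulVec, dotProduct]
    exact continuous_finset_sum _ fun j _ => continuous_const.mul (continuous_apply j)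
  have hfc : Continuous fun x : Sp =>
      (s ^ 2 / ((onH s x) 0) ^ 2) * snormSq (ψ (onH s x)) := by
    refine Continuous.mul ?_ (hsnc.comp hψHc)
    simp only [hcons0]
    exact continuous_const.div (htc.pow 2) fun x => by have := ht_pos x; positivity
  have hgc : Continuous fun x : Sp => snormSq (tMinus Γ (onH s x) (ψ (onH s x))) := by
    refine hsnc.comp ?_
    have heq : (fun x : Sp => tMinus Γ (onH s x) (ψ (onH s x)))
        = fun x => ψ (onH s x)
          - ∑ a : Fin 2, (x a / t x) • (Γ.γ 0 * Γ.γ a.succ).mulVec (ψ (onH s x)) := by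
      funext x
      simp only [tMinus, tMinusX, hcons0, hconss]
    rw [heq]
    refine hψHc.sub (continuous_finset_sum _ fun a _ => ?_)
    exact ((continuous_apply a).div htc fun x => (ht_pos x).ne').smul
      ((hmv _).comp hψHc)
  -- support
  have hzero : ∀ x : Sp, x ∉ Metric.closedBall (0:Sp) (s ^ 2) → ψ (onH s x) = 0 := by
    intro x hx
    by_contra hne
    have hK : inK (onH s x) := by
      by_contra h
      exact hne (hsupp _ h)
    obtain ⟨h2t, hrt⟩ := hK
    have hr : rsq (onH s x) = xrsq x := by
      simp only [rsq, xrsq, hconss]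
    rw [hr, hcons0] at hrt
    have hsq := Real.sq_sqrt (hxrsq_nonneg x)
    have hrn := Real.sqrt_nonneg (xrsq x)
    have hrs : Real.sqrt (xrsq x) ≤ s ^ 2 := by
      nlinarith [ht_sq x, ht_pos x]
    apply hx
    rw [Metric.mem_closedBall, dist_zero_right]
    rw [pi_norm_le_iff_of_nonneg (by positivity)]
    intro a
    have h1 : (x a) ^ 2 ≤ xrsq x := by
      unfold xrsq
      exact Finset.single_le_sum (fun i _ => sq_nonneg (x i)) (Finset.mem_univ a)
    calc ‖x a‖ = Real.sqrt ((x a) ^ 2) := by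
          rw [Real.sqrt_sq_eq_abs]; rfl
      _ ≤ Real.sqrt (xrsq x) := Real.sqrt_le_sqrt h1
      _ ≤ s ^ 2 := hrs
  have hfK : HasCompactSupport fun x : Sp =>
      (s ^ 2 / ((onH s x) 0) ^ 2) * snormSq (ψ (onH s x)) := by
    refine HasCompactSupport.intro (isCompact_closedBall (0:Sp) (s ^ 2)) fun x hx => ?_
    rw [hzero x hx, HypAux.snormSq_zero, mul_zero]
  have hgK : HasCompactSupport fun x : Sp =>
      snormSq (tMinus Γ (onH s x) (ψ (onH s x))) := by
    refine HasCompactSupport.intro (isCompact_closedBall (0:Sp) (s ^ 2)) fun x hx => ?_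
    rw [hzero x hx]
    have : tMinus Γ (onH s x) (0 : Spinor) = 0 := by
      simp [tMinus, tMinusX, Matrix.mulVec_zero]
    rw [this, HypAux.snormSq_zero]
  have hfi : Integrable fun x : Sp =>
      (s ^ 2 / ((onH s x) 0) ^ 2) * snormSq (ψ (onH s x)) :=
    hfc.integrable_of_hasCompactSupport hfK
  have hgi : Integrable fun x : Sp => snormSq (tMinus Γ (onH s x) (ψ (onH s x))) :=
    hgc.integrable_of_hasCompactSupport hgK
  -- integral identity
  have hED : ED Γ s ψ
      = (1/2) * (∫ x : Sp, (s ^ 2 / ((onH s x) 0) ^ 2) * snormSq (ψ (onH s x)))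
        + (1/2) * (∫ x : Sp, snormSq (tMinus Γ (onH s x) (ψ (onH s x)))) := by
    unfold ED
    calc (∫ x : Sp, EDdens Γ ψ (onH s x))
        = ∫ x : Sp, ((1/2) * ((s ^ 2 / ((onH s x) 0) ^ 2) * snormSq (ψ (onH s x)))
            + (1/2) * snormSq (tMinus Γ (onH s x) (ψ (onH s x)))) := by
          congr 1
          funext x
          exact hpt x
      _ = (∫ x : Sp, (1/2) * ((s ^ 2 / ((onH s x) 0) ^ 2) * snormSq (ψ (onH s x))))
            + ∫ x : Sp, (1/2) * snormSq (tMinus Γ (onH s x) (ψ (onH s x))) :=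
          integral_add (hfi.const_mul _) (hgi.const_mul _)
      _ = (1/2) * (∫ x : Sp, (s ^ 2 / ((onH s x) 0) ^ 2) * snormSq (ψ (onH s x)))
            + (1/2) * ∫ x : Sp, snormSq (tMinus Γ (onH s x) (ψ (onH s x))) := by
          rw [integral_const_mul, integral_const_mul]
  have hAnn : 0 ≤ ∫ x : Sp, (s ^ 2 / ((onH s x) 0) ^ 2) * snormSq (ψ (onH s x)) :=
    integral_nonneg fun x => mul_nonneg (by positivity) (HypAux.snormSq_nonneg _)
  have hBnn : 0 ≤ ∫ x : Sp, snormSq (tMinus Γ (onH s x) (ψ (onH s x))) :=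
    integral_nonneg fun x => HypAux.snormSq_nonneg _
  have hEplus : Eplus Γ s ψ = ∫ x : Sp, snormSq (tMinus Γ (onH s x) (ψ (onH s x))) := rfl
  refine ⟨by rw [hED, hEplus], ?_, ?_⟩
  · rw [hED]
    linarith
  · -- norm bound
    have hEDnn : 0 ≤ ED Γ s ψ := by rw [hED]; linarith
    have hA4 : (∫ x : Sp, (s ^ 2 / ((onH s x) 0) ^ 2) * snormSq (ψ (onH s x)))
        ≤ 4 * ED Γ s ψ := by rw [hED]; linarith
    have hB4 : (∫ x : Sp, snormSq (tMinus Γ (onH s x) (ψ (onH s x))))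
        ≤ 4 * ED Γ s ψ := by rw [hED]; linarith
    have hsqrt4 : Real.sqrt (4 * ED Γ s ψ) = 2 * Real.sqrt (ED Γ s ψ) := by
      rw [show (4:ℝ) * ED Γ s ψ = 2 ^ 2 * ED Γ s ψ by ring,
        Real.sqrt_mul (by positivity), Real.sqrt_sq (by norm_num)]
    have h1 : Real.sqrt (∫ x : Sp, (s ^ 2 / ((onH s x) 0) ^ 2) * snormSq (ψ (onH s x)))
        ≤ 2 * Real.sqrt (ED Γ s ψ) := by
      rw [← hsqrt4]
      exact Real.sqrt_le_sqrt hA4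
    have h2 : Real.sqrt (∫ x : Sp, snormSq (tMinus Γ (onH s x) (ψ (onH s x))))
        ≤ 2 * Real.sqrt (ED Γ s ψ) := by
      rw [← hsqrt4]
      exact Real.sqrt_le_sqrt hB4
    have h3 : (fun x : Sp => (s / (onH s x) 0) ^ 2 * snormSq (ψ (onH s x)))
        = fun x : Sp => (s ^ 2 / ((onH s x) 0) ^ 2) * snormSq (ψ (onH s x)) := by
      funext x
      rw [div_pow]
    rw [h3]
    linarith
end
end

section
/- For every t > 0, every x = (x_1,x_2) in R^2, and all vectors Psi, Phi in C^2, one has the exact identity ( Psi + (x_a/t) gamma^0 gamma^a Psi )^* gamma^0 ( Phi + (x_b/t) gamma^0 gamma^b Phi ) = ( (t^2 - |x|^2) / t^2 ) Psi^* gamma^0 Phi, where repeated Roman indices a, b are summed over 1,2. -/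
noncomputable section

open MeasureTheory Matrix Finset Real Filter

/-! Writing `(v)_+ = (1 + A) v` with `A = (x_a/t) γ^0 γ^a`, the matrix `A` is Hermitian and
anticommutes with `γ^0`, so `(1 + A)^* γ^0 (1 + A) = γ^0 (1 - A) (1 + A) = γ^0 (1 - A²)`;
the Clifford relations give `A² = |x|²/t²`. -/

theorem one_add_mul_mul_one_add_of_mul_eq_neg {R : Type*} [Ring R] {g A : R}
    (h : g * A = -(A * g)) : (1 + A) * g * (1 + A) = g * (1 - A * A) := by
  have hleft : (1 + A) * g = g * (1 - A) := by
    rw [add_mul, one_mul, mul_sub, mul_one, h, sub_neg_eq_add]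
  rw [hleft, mul_assoc]
  noncomm_ring

theorem star_mulVec_dotProduct_mulVec {n R : Type*} [Fintype n] [CommRing R] [StarRing R]
    (M N : Matrix n n R) (v w : n → R) :
    star (M *ᵥ v) ⬝ᵥ N *ᵥ (M *ᵥ w) = star v ⬝ᵥ (Mᴴ * N * M) *ᵥ w := by
  simp only [star_mulVec, dotProduct_mulVec, vecMul_vecMul]

namespace DiracMatrices

variable (Γ : DiracMatrices)

theorem γ_mul_self (μ : Fin 3) : Γ.γ μ * Γ.γ μ = ((-mink μ μ : ℝ) : ℂ) • 1 := by
  calc Γ.γ μ * Γ.γ μ = (2 : ℂ)⁻¹ • (Γ.γ μ * Γ.γ μ + Γ.γ μ * Γ.γ μ) := by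
        rw [← two_smul ℂ, smul_smul, inv_mul_cancel₀ two_ne_zero, one_smul]
    _ = ((-mink μ μ : ℝ) : ℂ) • 1 := by
        rw [Γ.clifford, smul_smul]
        push_cast
        ring_nf

theorem γ_zero_mul_self : Γ.γ 0 * Γ.γ 0 = 1 := by
  simpa [mink] using Γ.γ_mul_self 0

theorem γ_succ_mul_self (a : Fin 2) : Γ.γ a.succ * Γ.γ a.succ = -1 := by
  simpa [mink, Fin.succ_ne_zero] using Γ.γ_mul_self a.succ

theorem γ_anticomm {μ ν : Fin 3} (h : μ ≠ ν) : Γ.γ μ * Γ.γ ν = -(Γ.γ ν * Γ.γ μ) :=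
  eq_neg_of_add_eq_zero_left (by simpa [mink, h] using Γ.clifford μ ν)

theorem conjTranspose_γ_zero : (Γ.γ 0)ᴴ = Γ.γ 0 := by
  simpa [mink] using Γ.adjoint 0

theorem conjTranspose_γ_succ (a : Fin 2) : (Γ.γ a.succ)ᴴ = -Γ.γ a.succ := by
  simpa [mink, Fin.succ_ne_zero] using Γ.adjoint a.succ

def boost (a : Fin 2) : Matrix (Fin 2) (Fin 2) ℂ := Γ.γ 0 * Γ.γ a.succ

theorem conjTranspose_boost (a : Fin 2) : (Γ.boost a)ᴴ = Γ.boost a := by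
  rw [boost, conjTranspose_mul, conjTranspose_γ_succ, conjTranspose_γ_zero, neg_mul,
    Γ.γ_anticomm (Fin.succ_ne_zero a), neg_neg]

theorem γ_zero_mul_boost (a : Fin 2) : Γ.γ 0 * Γ.boost a = -(Γ.boost a * Γ.γ 0) := by
  rw [boost, mul_assoc, Γ.γ_anticomm (Fin.succ_ne_zero a).symm, mul_neg, ← mul_assoc]

theorem boost_mul_boost (a b : Fin 2) :
    Γ.boost a * Γ.boost b = -(Γ.γ a.succ * Γ.γ b.succ) := by
  rw [boost, boost, ← mul_assoc, mul_assoc (Γ.γ 0), Γ.γ_anticomm (Fin.succ_ne_zero a),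
    mul_neg, ← mul_assoc, γ_zero_mul_self, one_mul, neg_mul]

theorem boost_mul_self (a : Fin 2) : Γ.boost a * Γ.boost a = 1 := by
  rw [boost_mul_boost, γ_succ_mul_self, neg_neg]

theorem boost_anticomm {a b : Fin 2} (h : a ≠ b) :
    Γ.boost a * Γ.boost b = -(Γ.boost b * Γ.boost a) := by
  rw [boost_mul_boost, boost_mul_boost, Γ.γ_anticomm ((Fin.succ_injective 2).ne h)]

def boostSum (c : Fin 2 → ℝ) : Matrix (Fin 2) (Fin 2) ℂ := ∑ a, (c a : ℂ) • Γ.boost a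

theorem conjTranspose_boostSum (c : Fin 2 → ℝ) : (Γ.boostSum c)ᴴ = Γ.boostSum c := by
  simp [boostSum, conjTranspose_smul, conjTranspose_boost]

theorem γ_zero_mul_boostSum (c : Fin 2 → ℝ) :
    Γ.γ 0 * Γ.boostSum c = -(Γ.boostSum c * Γ.γ 0) := by
  simp only [boostSum, Finset.mul_sum, Finset.sum_mul, mul_smul_comm, smul_mul_assoc,
    γ_zero_mul_boost, smul_neg, Finset.sum_neg_distrib]

theorem boostSum_mul_self (c : Fin 2 → ℝ) :
    Γ.boostSum c * Γ.boostSum c = ((∑ a, c a ^ 2 : ℝ) : ℂ) • 1 := by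
  simp only [boostSum, Fin.sum_univ_two, add_mul, mul_add, smul_mul_assoc, mul_smul_comm,
    boost_mul_self, Γ.boost_anticomm (show (1 : Fin 2) ≠ 0 by decide)]
  push_cast
  module

theorem conjTranspose_one_add_boostSum_mul_γ_zero_mul (c : Fin 2 → ℝ) :
    (1 + Γ.boostSum c)ᴴ * Γ.γ 0 * (1 + Γ.boostSum c)
      = ((1 - ∑ a, c a ^ 2 : ℝ) : ℂ) • Γ.γ 0 := by
  rw [conjTranspose_add, conjTranspose_one, conjTranspose_boostSum,
    one_add_mul_mul_one_add_of_mul_eq_neg (Γ.γ_zero_mul_boostSum c), boostSum_mul_self,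
    mul_sub, mul_one, mul_smul_comm, mul_one]
  push_cast
  module

theorem tPlusX_eq_mulVec (t : ℝ) (x : Sp) (v : Spinor) :
    tPlusX Γ t x v = (1 + Γ.boostSum fun a => x a / t) *ᵥ v := by
  simp only [tPlusX, add_mulVec, one_mulVec, boostSum, Matrix.sum_mulVec, smul_mulVec,
    boost, Complex.coe_smul]

theorem bil_tPlusX {t : ℝ} (ht : t ≠ 0) (x : Sp) (Ψ Φ : Spinor) :
    bil Γ (tPlusX Γ t x Ψ) (tPlusX Γ t x Φ)
      = (((t ^ 2 - xrsq x) / t ^ 2 : ℝ) : ℂ) * bil Γ Ψ Φ := by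
  have hcoef : 1 - ∑ a, (x a / t) ^ 2 = (t ^ 2 - xrsq x) / t ^ 2 := by
    simp only [xrsq, div_pow, ← Finset.sum_div]
    field_simp
  rw [bil, tPlusX_eq_mulVec, tPlusX_eq_mulVec, star_mulVec_dotProduct_mulVec,
    conjTranspose_one_add_boostSum_mul_γ_zero_mul, hcoef, smul_mulVec, dotProduct_smul,
    smul_eq_mul, bil]

end DiracMatrices

/-- The `(·)_+`–`(·)_+` interaction carries the factor `(t² - |x|²)/t²`. -/
theorem plus_plus_interaction_identity
    (Γ : DiracMatrices) (t : ℝ) (ht : 0 < t) (x : Sp) (Ψ Φ : Spinor) :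
    star (Ψ + ∑ a : Fin 2, (x a / t) • (Γ.γ 0 * Γ.γ a.succ).mulVec Ψ)
        ⬝ᵥ (Γ.γ 0).mulVec (Φ + ∑ b : Fin 2, (x b / t) • (Γ.γ 0 * Γ.γ b.succ).mulVec Φ)
      = (((t ^ 2 - xrsq x) / t ^ 2 : ℝ) : ℂ) * (star Ψ ⬝ᵥ (Γ.γ 0).mulVec Φ) :=
  Γ.bil_tPlusX ht.ne' x Ψ Φ
end
end

section
/- Let psi : R^{1+2} -> C^2 be sufficiently smooth. For arbitrary multi-indices I, J there exists a constant C = C(I,J) such that pointwise | partial^I L^J ( psi^* gamma^0 psi ) | <= C sum over |I_1|+|I_2| <= |I| and |J_1|+|J_2| <= |J| of | ( partial^{I_1} hat{L}^{J_1} psi )^* gamma^0 ( partial^{I_2} hat{L}^{J_2} psi ) |. -/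
noncomputable section

open MeasureTheory Matrix Finset Real Filter

/-! ### Auxiliary machinery for the iterated Leibniz estimate -/

section IBLEAux

open Matrix

/-- The bilinear pairing `v^* N w` as a continuous ℝ-bilinear map. -/
noncomputable def bbL (N : Matrix (Fin 2) (Fin 2) ℂ) : Spinor →L[ℝ] Spinor →L[ℝ] ℂ :=
  LinearMap.toContinuousLinearMap <|
  { toFun := fun v => LinearMap.toContinuousLinearMap
      { toFun := fun w => star v ⬝ᵥ N.mulVec w
        map_add' := fun w₁ w₂ => by simp [Matrix.mulVec_add, dotProduct_add]; ring
        map_smul' := fun r w => by simp [Matrix.mulVec_smul, dotProduct_smul]; ring }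
    map_add' := fun v₁ v₂ => by
      ext w; simp [star_add, add_dotProduct]
    map_smul' := fun r v => by
      ext w; simp [star_smul, smul_dotProduct] }

lemma bbB (N : Matrix (Fin 2) (Fin 2) ℂ) :
    IsBoundedBilinearMap ℝ (fun vw : Spinor × Spinor => star vw.1 ⬝ᵥ N.mulVec vw.2) :=
  (bbL N).isBoundedBilinearMap

lemma contDiff_pt {V : Type*} [NormedAddCommGroup V] [NormedSpace ℝ V] (μ : Fin 3)
    {f : Spt → V} (hf : ContDiff ℝ (⊤ : ℕ∞) f) : ContDiff ℝ (⊤ : ℕ∞) (pt μ f) :=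
  (ContinuousLinearMap.apply ℝ V ((Pi.single μ 1 : Spt))).contDiff.comp (hf.fderiv_right (by simp))

lemma contDiff_mulVec (M : Matrix (Fin 2) (Fin 2) ℂ) {f : Spt → Spinor}
    (hf : ContDiff ℝ (⊤ : ℕ∞) f) : ContDiff ℝ (⊤ : ℕ∞) (fun p => M.mulVec (f p)) :=
  (((M.mulVecLin).restrictScalars ℝ).toContinuousLinearMap).contDiff.comp hf

lemma contDiff_Lb {V : Type*} [NormedAddCommGroup V] [NormedSpace ℝ V] (a : Fin 2)
    {f : Spt → V} (hf : ContDiff ℝ (⊤ : ℕ∞) f) : ContDiff ℝ (⊤ : ℕ∞) (Lb a f) := by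
  have h0 : ContDiff ℝ (⊤ : ℕ∞) (fun p : Spt => p 0) :=
    (ContinuousLinearMap.proj 0 : Spt →L[ℝ] ℝ).contDiff
  have hs : ContDiff ℝ (⊤ : ℕ∞) (fun p : Spt => p a.succ) :=
    (ContinuousLinearMap.proj a.succ : Spt →L[ℝ] ℝ).contDiff
  exact (h0.smul (contDiff_pt _ hf)).add (hs.smul (contDiff_pt _ hf))

lemma contDiff_hatLb (Γ : DiracMatrices) (a : Fin 2) {f : Spt → Spinor}
    (hf : ContDiff ℝ (⊤ : ℕ∞) f) : ContDiff ℝ (⊤ : ℕ∞) (hatLb Γ a f) :=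
  (contDiff_Lb a hf).sub ((contDiff_mulVec _ hf).const_smul ((1 : ℂ)/2))

lemma contDiff_hatLbList (Γ : DiracMatrices) (J : List (Fin 2)) {f : Spt → Spinor}
    (hf : ContDiff ℝ (⊤ : ℕ∞) f) : ContDiff ℝ (⊤ : ℕ∞) (hatLbList Γ J f) := by
  induction J with
  | nil => exact hf
  | cons a J ih => exact contDiff_hatLb Γ a ih

lemma contDiff_ptList {V : Type*} [NormedAddCommGroup V] [NormedSpace ℝ V] (I : List (Fin 3))
    {f : Spt → V} (hf : ContDiff ℝ (⊤ : ℕ∞) f) : ContDiff ℝ (⊤ : ℕ∞) (ptList I f) := by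
  induction I with
  | nil => exact hf
  | cons μ I ih => exact contDiff_pt μ ih

lemma contDiff_bbfg (N : Matrix (Fin 2) (Fin 2) ℂ) {f g : Spt → Spinor}
    (hf : ContDiff ℝ (⊤ : ℕ∞) f) (hg : ContDiff ℝ (⊤ : ℕ∞) g) :
    ContDiff ℝ (⊤ : ℕ∞) (fun q => star (f q) ⬝ᵥ N.mulVec (g q)) :=
  (bbB N).contDiff.comp (hf.prodMk hg)

/-! List-sum helpers. -/

lemma sum_map_add {α : Type*} (l : List α) (f g : α → ℂ) :
    (l.map fun a => f a + g a).sum = (l.map f).sum + (l.map g).sum := by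
  induction l with
  | nil => simp
  | cons a l ih => simp only [List.map_cons, List.sum_cons, ih]; ring

lemma smul_sum_map {α : Type*} (r : ℝ) (l : List α) (f : α → ℂ) :
    r • (l.map f).sum = (l.map fun a => r • f a).sum := by
  induction l with
  | nil => simp
  | cons a l ih => simp only [List.map_cons, List.sum_cons, smul_add, ih]

lemma norm_sum_map {α : Type*} (l : List α) (f : α → ℂ) :
    ‖(l.map f).sum‖ ≤ (l.map fun a => ‖f a‖).sum := by
  induction l with
  | nil => simp
  | cons a l ih =>
    simp only [List.map_cons, List.sum_cons]
    exact (norm_add_le _ _).trans (by linarith)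

lemma sum_map_const {α : Type*} (l : List α) (c : ℝ) :
    (l.map fun _ => c).sum = l.length * c := by
  induction l with
  | nil => simp
  | cons a l ih => simp [ih]; ring

lemma contDiff_list_sum {α : Type*} (l : List α) (F : α → Spt → ℂ)
    (hF : ∀ a ∈ l, ContDiff ℝ (⊤ : ℕ∞) (F a)) :
    ContDiff ℝ (⊤ : ℕ∞) (fun q => (l.map fun a => F a q).sum) := by
  induction l with
  | nil => simpa using contDiff_const (c := (0 : ℂ))
  | cons a l ih =>
    simp only [List.map_cons, List.sum_cons]
    exact (hF a (by simp)).add (ih fun b hb => hF b (by simp [hb]))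

lemma pt_add {f g : Spt → ℂ} {p : Spt} (μ : Fin 3)
    (hf : DifferentiableAt ℝ f p) (hg : DifferentiableAt ℝ g p) :
    pt μ (fun q => f q + g q) p = pt μ f p + pt μ g p := by
  simp only [pt, fderiv_fun_add hf hg, ContinuousLinearMap.add_apply]

lemma pt_sum {α : Type*} (μ : Fin 3) (l : List α) (F : α → Spt → ℂ)
    (hF : ∀ a ∈ l, ContDiff ℝ (⊤ : ℕ∞) (F a)) (p : Spt) :
    pt μ (fun q => (l.map fun a => F a q).sum) p = (l.map fun a => pt μ (F a) p).sum := by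
  induction l with
  | nil => simp [pt]
  | cons a l ih =>
    simp only [List.map_cons, List.sum_cons]
    rw [pt_add μ (((hF a (by simp)).differentiable (by simp)) p)
      (((contDiff_list_sum l F fun b hb => hF b (by simp [hb])).differentiable (by simp)) p),
      ih fun b hb => hF b (by simp [hb])]

/-! The Leibniz rules. -/

lemma pt_bb (N : Matrix (Fin 2) (Fin 2) ℂ) {f g : Spt → Spinor}
    (hf : ContDiff ℝ (⊤ : ℕ∞) f) (hg : ContDiff ℝ (⊤ : ℕ∞) g) (μ : Fin 3) (p : Spt) :
    pt μ (fun q => star (f q) ⬝ᵥ N.mulVec (g q)) p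
      = star (pt μ f p) ⬝ᵥ N.mulVec (g p) + star (f p) ⬝ᵥ N.mulVec (pt μ g p) := by
  have hB := bbB N
  have h1 : HasFDerivAt (fun q => star (f q) ⬝ᵥ N.mulVec (g q))
      ((hB.deriv (f p, g p)).comp ((fderiv ℝ f p).prod (fderiv ℝ g p))) p :=
    (hB.hasFDerivAt (f p, g p)).comp (f := fun x => (f x, g x)) p
      (((hf.differentiable (by simp)) p).hasFDerivAt.prodMk ((hg.differentiable (by simp)) p).hasFDerivAt)
  rw [pt, h1.fderiv, ContinuousLinearMap.comp_apply, ContinuousLinearMap.prod_apply,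
    hB.deriv_apply]
  exact add_comm _ _

lemma gsq (Γ : DiracMatrices) : Γ.γ 0 * Γ.γ 0 = 1 := by
  have h := Γ.clifford 0 0
  simp only [mink, if_pos rfl] at h
  norm_num at h
  have h2 : (2:ℂ) • (Γ.γ 0 * Γ.γ 0) = (2:ℂ) • (1 : Matrix (Fin 2) (Fin 2) ℂ) := by
    rw [two_smul]; simpa using h
  exact smul_right_injective _ two_ne_zero h2

lemma gid (Γ : DiracMatrices) (a : Fin 2) :
    (Γ.γ 0 * Γ.γ a.succ)ᴴ * Γ.γ 0 + Γ.γ 0 * (Γ.γ 0 * Γ.γ a.succ) = 0 := by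
  have hs : (Γ.γ a.succ)ᴴ = -Γ.γ a.succ := by
    simpa [mink, Fin.succ_ne_zero a] using Γ.adjoint a.succ
  have h0 : (Γ.γ 0)ᴴ = Γ.γ 0 := by
    simpa [mink] using Γ.adjoint 0
  rw [conjTranspose_mul, hs, h0, Matrix.neg_mul, Matrix.neg_mul, mul_assoc, gsq Γ,
    ← mul_assoc, gsq Γ]
  simp

lemma bb_transfer (M N : Matrix (Fin 2) (Fin 2) ℂ) (v w : Spinor) :
    star (M.mulVec v) ⬝ᵥ N.mulVec w = star v ⬝ᵥ ((Mᴴ * N).mulVec w) := by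
  rw [Matrix.star_mulVec, Matrix.dotProduct_mulVec, Matrix.dotProduct_mulVec,
    Matrix.vecMul_vecMul]

lemma bb_gamma (Γ : DiracMatrices) (a : Fin 2) (v w : Spinor) :
    star ((Γ.γ 0 * Γ.γ a.succ).mulVec v) ⬝ᵥ (Γ.γ 0).mulVec w
      + star v ⬝ᵥ (Γ.γ 0).mulVec ((Γ.γ 0 * Γ.γ a.succ).mulVec w) = 0 := by
  rw [bb_transfer, Matrix.mulVec_mulVec, ← dotProduct_add, ← Matrix.add_mulVec,
    gid Γ a]
  simp

lemma bb_csmul_left' (N : Matrix (Fin 2) (Fin 2) ℂ) (c : ℂ) (v w : Spinor) :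
    star (c • v) ⬝ᵥ N.mulVec w = (starRingEnd ℂ c) * (star v ⬝ᵥ N.mulVec w) := by
  simp [star_smul, smul_dotProduct, smul_eq_mul, Complex.star_def]

lemma bb_csmul_right' (N : Matrix (Fin 2) (Fin 2) ℂ) (c : ℂ) (v w : Spinor) :
    star v ⬝ᵥ N.mulVec (c • w) = c * (star v ⬝ᵥ N.mulVec w) := by
  simp [Matrix.mulVec_smul, dotProduct_smul, smul_eq_mul]; ring

lemma bb_rsmul_left (N : Matrix (Fin 2) (Fin 2) ℂ) (r : ℝ) (v w : Spinor) :
    star (r • v) ⬝ᵥ N.mulVec w = (r : ℂ) * (star v ⬝ᵥ N.mulVec w) := by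
  have h : r • v = (r : ℂ) • v := by ext i; simp [Complex.real_smul]
  rw [h, bb_csmul_left', Complex.conj_ofReal]

lemma bb_rsmul_right (N : Matrix (Fin 2) (Fin 2) ℂ) (r : ℝ) (v w : Spinor) :
    star v ⬝ᵥ N.mulVec (r • w) = (r : ℂ) * (star v ⬝ᵥ N.mulVec w) := by
  have h : r • w = (r : ℂ) • w := by ext i; simp [Complex.real_smul]
  rw [h, bb_csmul_right']

lemma bb_add_left (N : Matrix (Fin 2) (Fin 2) ℂ) (v₁ v₂ w : Spinor) :
    star (v₁ + v₂) ⬝ᵥ N.mulVec w = star v₁ ⬝ᵥ N.mulVec w + star v₂ ⬝ᵥ N.mulVec w := by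
  simp [star_add, add_dotProduct]

lemma bb_add_right (N : Matrix (Fin 2) (Fin 2) ℂ) (v w₁ w₂ : Spinor) :
    star v ⬝ᵥ N.mulVec (w₁ + w₂) = star v ⬝ᵥ N.mulVec w₁ + star v ⬝ᵥ N.mulVec w₂ := by
  simp [Matrix.mulVec_add, dotProduct_add]; ring

lemma bb_sub_left (N : Matrix (Fin 2) (Fin 2) ℂ) (v₁ v₂ w : Spinor) :
    star (v₁ - v₂) ⬝ᵥ N.mulVec w = star v₁ ⬝ᵥ N.mulVec w - star v₂ ⬝ᵥ N.mulVec w := by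
  simp [star_sub, sub_dotProduct]

lemma bb_sub_right (N : Matrix (Fin 2) (Fin 2) ℂ) (v w₁ w₂ : Spinor) :
    star v ⬝ᵥ N.mulVec (w₁ - w₂) = star v ⬝ᵥ N.mulVec w₁ - star v ⬝ᵥ N.mulVec w₂ := by
  simp [Matrix.mulVec_sub, dotProduct_sub]; ring

lemma bb_csmul_left (N : Matrix (Fin 2) (Fin 2) ℂ) (c : ℂ) (v w : Spinor) :
    star (c • v) ⬝ᵥ N.mulVec w = (starRingEnd ℂ c) * (star v ⬝ᵥ N.mulVec w) := by
  simp [star_smul, smul_dotProduct, smul_eq_mul, Complex.star_def]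

lemma bb_csmul_right (N : Matrix (Fin 2) (Fin 2) ℂ) (c : ℂ) (v w : Spinor) :
    star v ⬝ᵥ N.mulVec (c • w) = c * (star v ⬝ᵥ N.mulVec w) := by
  simp [Matrix.mulVec_smul, dotProduct_smul, smul_eq_mul]; ring

lemma lb_bb (Γ : DiracMatrices) (a : Fin 2) {f g : Spt → Spinor}
    (hf : ContDiff ℝ (⊤ : ℕ∞) f) (hg : ContDiff ℝ (⊤ : ℕ∞) g) (p : Spt) :
    Lb a (fun q => star (f q) ⬝ᵥ (Γ.γ 0).mulVec (g q)) p
      = star (hatLb Γ a f p) ⬝ᵥ (Γ.γ 0).mulVec (g p)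
        + star (f p) ⬝ᵥ (Γ.γ 0).mulVec (hatLb Γ a g p) := by
  have key := bb_gamma Γ a (f p) (g p)
  have h1 := pt_bb (Γ.γ 0) hf hg a.succ p
  have h2 := pt_bb (Γ.γ 0) hf hg 0 p
  have hc : (starRingEnd ℂ) ((1:ℂ)/2) = 1/2 := by rw [map_div₀, _root_.map_one, map_ofNat]
  simp only [Lb, hatLb, h1, h2, bb_sub_left, bb_sub_right, bb_csmul_left, bb_csmul_right,
    bb_add_left, bb_add_right, bb_rsmul_left, bb_rsmul_right, smul_eq_mul,
    Complex.real_smul, hc]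
  linear_combination ((1:ℂ)/2) * key

end IBLEAux

section IBLEMain

open Matrix

/-- The bilinear term indexed by a quadruple of multi-indices. -/
def TT (Γ : DiracMatrices) (ψ : Spt → Spinor)
    (q : List (Fin 3) × List (Fin 3) × List (Fin 2) × List (Fin 2)) (p : Spt) : ℂ :=
  star (ptList q.1 (hatLbList Γ q.2.2.1 ψ) p)
    ⬝ᵥ (Γ.γ 0).mulVec (ptList q.2.1 (hatLbList Γ q.2.2.2 ψ) p)

lemma contDiff_TT (Γ : DiracMatrices) {ψ : Spt → Spinor} (hψ : ContDiff ℝ (⊤ : ℕ∞) ψ)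
    (q : List (Fin 3) × List (Fin 3) × List (Fin 2) × List (Fin 2)) :
    ContDiff ℝ (⊤ : ℕ∞) (fun p => TT Γ ψ q p) :=
  contDiff_bbfg _ (contDiff_ptList _ (contDiff_hatLbList Γ _ hψ))
    (contDiff_ptList _ (contDiff_hatLbList Γ _ hψ))

lemma mainJ (Γ : DiracMatrices) {ψ : Spt → Spinor} (hψ : ContDiff ℝ (⊤ : ℕ∞) ψ)
    (J : List (Fin 2)) :
    ∃ Ts : List (List (Fin 2) × List (Fin 2)),
      (∀ q ∈ Ts, q.1.length + q.2.length ≤ J.length) ∧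
      ∀ p, LbList J (fun q : Spt => star (ψ q) ⬝ᵥ (Γ.γ 0).mulVec (ψ q)) p
        = (Ts.map (fun q => TT Γ ψ ([], [], q.1, q.2) p)).sum := by
  induction J with
  | nil =>
    refine ⟨[([], [])], by simp, fun p => ?_⟩
    simp [LbList, TT, hatLbList, ptList]
  | cons a J ih =>
    obtain ⟨Ts, hc, hrep⟩ := ih
    refine ⟨Ts.map (fun q => (a :: q.1, q.2)) ++ Ts.map (fun q => (q.1, a :: q.2)), ?_, ?_⟩
    · intro q hq
      simp only [List.mem_append, List.mem_map] at hq
      rcases hq with ⟨r, hr, rfl⟩ | ⟨r, hr, rfl⟩ <;>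
        · have := hc r hr; simp only [List.length_cons]; omega
    · intro p
      have hLb : LbList (a :: J) (fun q : Spt => star (ψ q) ⬝ᵥ (Γ.γ 0).mulVec (ψ q))
          = Lb a (fun p => (Ts.map (fun q => TT Γ ψ ([], [], q.1, q.2) p)).sum) := by
        show Lb a (LbList J _) = _
        rw [funext hrep]
      rw [hLb]
      have hsm : ∀ q ∈ Ts, ContDiff ℝ (⊤ : ℕ∞) (fun p => TT Γ ψ ([], [], q.1, q.2) p) :=
        fun q _ => contDiff_TT Γ hψ _
      have hLb2 : Lb a (fun p => (Ts.map (fun q => TT Γ ψ ([], [], q.1, q.2) p)).sum) p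
          = (Ts.map (fun q => Lb a (fun p => TT Γ ψ ([], [], q.1, q.2) p) p)).sum := by
        show _ • pt a.succ _ p + _ • pt 0 _ p = _
        rw [pt_sum a.succ Ts _ hsm p, pt_sum 0 Ts _ hsm p, smul_sum_map, smul_sum_map,
          ← sum_map_add]
        rfl
      rw [hLb2, List.map_append, List.sum_append, List.map_map, List.map_map, ← sum_map_add]
      apply congrArg List.sum
      apply List.map_congr_left
      intro q hq
      exact lb_bb Γ a (contDiff_hatLbList Γ q.1 hψ) (contDiff_hatLbList Γ q.2 hψ) p

lemma mainIJ (Γ : DiracMatrices) {ψ : Spt → Spinor} (hψ : ContDiff ℝ (⊤ : ℕ∞) ψ)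
    (I : List (Fin 3)) (J : List (Fin 2)) :
    ∃ Ts : List (List (Fin 3) × List (Fin 3) × List (Fin 2) × List (Fin 2)),
      (∀ q ∈ Ts, q.1.length + q.2.1.length ≤ I.length ∧
        q.2.2.1.length + q.2.2.2.length ≤ J.length) ∧
      ∀ p, ptList I (LbList J (fun q : Spt => star (ψ q) ⬝ᵥ (Γ.γ 0).mulVec (ψ q))) p
        = (Ts.map (fun q => TT Γ ψ q p)).sum := by
  induction I with
  | nil =>
    obtain ⟨Ts, hc, hrep⟩ := mainJ Γ hψ J
    refine ⟨Ts.map (fun q => ([], [], q.1, q.2)), ?_, ?_⟩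
    · intro q hq
      simp only [List.mem_map] at hq
      obtain ⟨r, hr, rfl⟩ := hq
      exact ⟨by simp, hc r hr⟩
    · intro p
      rw [List.map_map]
      exact hrep p
  | cons μ I ih =>
    obtain ⟨Ts, hc, hrep⟩ := ih
    refine ⟨Ts.map (fun q => (μ :: q.1, q.2.1, q.2.2)) ++
        Ts.map (fun q => (q.1, μ :: q.2.1, q.2.2)), ?_, ?_⟩
    · intro q hq
      simp only [List.mem_append, List.mem_map] at hq
      rcases hq with ⟨r, hr, rfl⟩ | ⟨r, hr, rfl⟩ <;>
        · have := hc r hr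
          constructor <;> simp only [List.length_cons] <;> omega
    · intro p
      have hpt : ptList (μ :: I) (LbList J (fun q : Spt => star (ψ q) ⬝ᵥ (Γ.γ 0).mulVec (ψ q)))
          = pt μ (fun p => (Ts.map (fun q => TT Γ ψ q p)).sum) := by
        show pt μ (ptList I _) = _
        rw [funext hrep]
      rw [hpt, pt_sum μ Ts _ (fun q _ => contDiff_TT Γ hψ q) p,
        List.map_append, List.sum_append, List.map_map, List.map_map, ← sum_map_add]
      apply congrArg List.sum
      apply List.map_congr_left
      intro q hq
      exact pt_bb (Γ.γ 0) (contDiff_ptList q.1 (contDiff_hatLbList Γ q.2.2.1 hψ))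
        (contDiff_ptList q.2.1 (contDiff_hatLbList Γ q.2.2.2 hψ)) μ p

lemma tt_le (Γ : DiracMatrices) (ψ : Spt → Spinor) (p : Spt) (n m : ℕ)
    (I₁ I₂ : List (Fin 3)) (J₁ J₂ : List (Fin 2))
    (h1 : I₁.length + I₂.length ≤ n) (h2 : J₁.length + J₂.length ≤ m) :
    ‖TT Γ ψ (I₁, I₂, J₁, J₂) p‖
      ≤ ∑ k₁ ∈ Finset.range (n + 1),
          ∑ k₂ ∈ Finset.range (n + 1 - k₁),
          ∑ l₁ ∈ Finset.range (m + 1),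
          ∑ l₂ ∈ Finset.range (m + 1 - l₁),
          ∑ f₁ : Fin k₁ → Fin 3, ∑ f₂ : Fin k₂ → Fin 3,
          ∑ g₁ : Fin l₁ → Fin 2, ∑ g₂ : Fin l₂ → Fin 2,
            ‖star (ptList (List.ofFn f₁) (hatLbList Γ (List.ofFn g₁) ψ) p)
                ⬝ᵥ (Γ.γ 0).mulVec
                    (ptList (List.ofFn f₂) (hatLbList Γ (List.ofFn g₂) ψ) p)‖ := by
  refine le_trans ?_ (Finset.single_le_sum (fun i _ => by positivity)
    (show I₁.length ∈ Finset.range (n + 1) by simp only [Finset.mem_range]; omega))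
  refine le_trans ?_ (Finset.single_le_sum (fun i _ => by positivity)
    (show I₂.length ∈ Finset.range (n + 1 - I₁.length) by simp only [Finset.mem_range]; omega))
  refine le_trans ?_ (Finset.single_le_sum (fun i _ => by positivity)
    (show J₁.length ∈ Finset.range (m + 1) by simp only [Finset.mem_range]; omega))
  refine le_trans ?_ (Finset.single_le_sum (fun i _ => by positivity)
    (show J₂.length ∈ Finset.range (m + 1 - J₁.length) by simp only [Finset.mem_range]; omega))
  refine le_trans ?_ (Finset.single_le_sum (fun i _ => by positivity) (Finset.mem_univ I₁.get))
  refine le_trans ?_ (Finset.single_le_sum (fun i _ => by positivity) (Finset.mem_univ I₂.get))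
  refine le_trans ?_ (Finset.single_le_sum (fun i _ => by positivity) (Finset.mem_univ J₁.get))
  refine le_trans ?_ (Finset.single_le_sum (fun i _ => by positivity) (Finset.mem_univ J₂.get))
  exact le_of_eq (by simp [TT, List.ofFn_get])

end IBLEMain

lemma final_helper {α : Type*} (Ts : List α) (F : α → ℂ) (S : ℝ) (hS0 : 0 ≤ S)
    (hF : ∀ q ∈ Ts, ‖F q‖ ≤ S) : ‖(Ts.map F).sum‖ ≤ ((Ts.length : ℝ) + 1) * S := by
  calc ‖(Ts.map F).sum‖ ≤ (Ts.map (fun q => ‖F q‖)).sum := norm_sum_map _ _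
    _ ≤ (Ts.map (fun _ => S)).sum := List.sum_le_sum hF
    _ = (Ts.length : ℝ) * S := sum_map_const _ _
    _ ≤ ((Ts.length : ℝ) + 1) * S := by nlinarith

/-- Iterated Leibniz estimate: `∂^I L^J (ψ^* γ^0 ψ)` is controlled by
bilinear terms in `∂^{I₁} hat L^{J₁} ψ` and `∂^{I₂} hat L^{J₂} ψ` with
`|I₁|+|I₂| ≤ |I|` and `|J₁|+|J₂| ≤ |J|`. -/
theorem iterated_boost_leibniz_estimate
    (Γ : DiracMatrices) (ψ : Spt → Spinor) (hψ : ContDiff ℝ (⊤ : ℕ∞) ψ)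
    (I : List (Fin 3)) (J : List (Fin 2)) :
    ∃ C > (0 : ℝ), ∀ p : Spt,
      ‖ptList I (LbList J (fun q : Spt => star (ψ q) ⬝ᵥ (Γ.γ 0).mulVec (ψ q))) p‖
        ≤ C * ∑ k₁ ∈ Finset.range (I.length + 1),
              ∑ k₂ ∈ Finset.range (I.length + 1 - k₁),
              ∑ l₁ ∈ Finset.range (J.length + 1),
              ∑ l₂ ∈ Finset.range (J.length + 1 - l₁),
              ∑ f₁ : Fin k₁ → Fin 3, ∑ f₂ : Fin k₂ → Fin 3,
              ∑ g₁ : Fin l₁ → Fin 2, ∑ g₂ : Fin l₂ → Fin 2,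
                ‖star (ptList (List.ofFn f₁) (hatLbList Γ (List.ofFn g₁) ψ) p)
                    ⬝ᵥ (Γ.γ 0).mulVec
                        (ptList (List.ofFn f₂) (hatLbList Γ (List.ofFn g₂) ψ) p)‖ := by
  obtain ⟨Ts, hc, hrep⟩ := mainIJ Γ hψ I J
  refine ⟨(Ts.length : ℝ) + 1, by positivity, fun p => ?_⟩
  rw [hrep p]
  refine final_helper Ts _ _ (by positivity) ?_
  intro q hq
  obtain ⟨h1, h2⟩ := hc q hq
  exact tt_le Γ ψ p I.length J.length q.1 q.2.1 q.2.2.1 q.2.2.2 h1 h2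
end
end
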